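/- Let f be normalized analytic and univalent on 𝔻. Then f ∈ UST if and only if Re((f(z) − f(xz))/((1 − x)·z·f'(z))) ≥ 0 for every z ∈ 𝔻 with z ≠ 0 and every x ∈ ℂ with |x| = 1 and x ≠ 1. -/

import Mathlib

open Complex Metric Set

noncomputable section

/-- The open unit disk in ℂ. -/
def unitDisk : Set ℂ := Metric.ball (0 : ℂ) 1

/-- `f` is normalized analytic on the unit disk: analytic there, `f 0 = 0`, `f' 0 = 1`. -/
def IsNormalized (f : ℂ → ℂ) : Prop :=
  DifferentiableOn ℂ f unitDisk ∧ f 0 = 0 ∧ deriv f 0 = 1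

/-- Uniformly starlike functions (two-variable characterization). -/
def IsUST (f : ℂ → ℂ) : Prop :=
  IsNormalized f ∧ Set.InjOn f unitDisk ∧
    ∀ z ∈ unitDisk, ∀ ζ ∈ unitDisk, z ≠ ζ →
      0 ≤ ((z - ζ) * deriv f z / (f z - f ζ)).re

/-- Uniformly convex functions (one-variable characterization). -/
def IsUCV (f : ℂ → ℂ) : Prop :=
  IsNormalized f ∧ Set.InjOn f unitDisk ∧
    ∀ z ∈ unitDisk,
      ‖z * deriv (deriv f) z / deriv f z‖
        < (1 + z * deriv (deriv f) z / deriv f z).re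

/-- Parabolic starlike functions. -/
def IsSP (f : ℂ → ℂ) : Prop :=
  IsNormalized f ∧
    ∀ z ∈ unitDisk, z ≠ 0 →
      ‖z * deriv f z / f z - 1‖ < (z * deriv f z / f z).re

/-- The `n`-th Taylor coefficient of `f` at the origin. -/
def taylorCoeff (f : ℂ → ℂ) (n : ℕ) : ℂ :=
  iteratedDeriv n f 0 / (n.factorial : ℂ)

/-!
Write `Q(z, ζ) = (z - ζ) f'(z) / (f z - f ζ)`, extended by `Q(z, z) = 1`. Since `f` is univalent,
`Q` is analytic in each variable separately wherever `f'` does not vanish at the fixed variable.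
Writing `ζ = x z`, the one-variable condition says exactly that `Re Q ≥ 0` on the torus
`|z| = |ζ|`. The minimum principle for the harmonic function `Re Q` in the variable of smaller
modulus then spreads this to all of `𝔻 × 𝔻`; the points where `f'` vanishes are isolated, since
`f'(0) = 1`, and are reached by continuity.
-/

open Filter Topology

section

variable {𝕜 E : Type*} [NontriviallyNormedField 𝕜] [NormedAddCommGroup E] [NormedSpace 𝕜 E]

theorem dslope_comm (f : 𝕜 → E) (a b : 𝕜) : dslope f a b = dslope f b a := by
  rcases eq_or_ne a b with rfl | hab
  · rfl
  · rw [dslope_of_ne f hab.symm, dslope_of_ne f hab, slope_comm]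

theorem dslope_ne_zero_of_injOn {f : 𝕜 → E} {U : Set 𝕜} (hinj : InjOn f U) {a b : 𝕜}
    (ha : a ∈ U) (hb : b ∈ U) (hfa : deriv f a ≠ 0) : dslope f a b ≠ 0 := by
  intro h
  have hfab : f b = f a := by
    rw [← sub_eq_zero, ← sub_smul_dslope, h, smul_zero]
  obtain rfl := hinj hb ha hfab
  exact hfa (by rwa [dslope_same] at h)

theorem AnalyticOnNhd.eventually_ne_zero_of_preconnected {g : 𝕜 → E} {U : Set 𝕜}
    (hg : AnalyticOnNhd 𝕜 g U) (hU : IsPreconnected U) {z₀ ζ : 𝕜} (hz₀ : z₀ ∈ U)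
    (hgz₀ : g z₀ ≠ 0) (hζ : ζ ∈ U) : ∀ᶠ w in 𝓝[≠] ζ, g w ≠ 0 := by
  by_contra h
  simp only [not_eventually, not_not] at h
  exact hgz₀ (hg.eqOn_zero_of_preconnected_of_frequently_eq_zero hU hζ h hz₀)

end

theorem Complex.re_inv_nonneg_iff (z : ℂ) : 0 ≤ z⁻¹.re ↔ 0 ≤ z.re := by
  rw [inv_re]
  rcases eq_or_ne z 0 with rfl | hz
  · simp
  · rw [le_div_iff₀ (normSq_pos.mpr hz), zero_mul]

theorem Complex.re_div_nonneg_comm (a b : ℂ) : 0 ≤ (a / b).re ↔ 0 ≤ (b / a).re := by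
  rw [← inv_div, re_inv_nonneg_iff]

theorem Complex.re_nonneg_of_forall_mem_sphere {F : ℂ → ℂ} {c : ℂ} {r : ℝ}
    (hF : DifferentiableOn ℂ F (closedBall c r)) (hsphere : ∀ w ∈ sphere c r, 0 ≤ (F w).re)
    {w : ℂ} (hw : w ∈ closedBall c r) : 0 ≤ (F w).re := by
  rcases (mem_closedBall.mp hw).eq_or_lt with hw' | hw'
  · exact hsphere w (mem_sphere.mpr hw')
  have hr : r ≠ 0 := (dist_nonneg.trans_lt hw').ne'
  -- `‖exp (-F)‖ = exp (-Re F)`, so the maximum modulus principle applies to `exp (-F)`.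
  have hexp : ‖exp (-F w)‖ ≤ 1 := by
    refine norm_le_of_forall_mem_frontier_norm_le isBounded_ball
      (hF.neg.cexp.diffContOnCl_ball Subset.rfl) (fun ζ hζ => ?_)
      (subset_closure (mem_ball.mpr hw'))
    rw [frontier_ball c hr] at hζ
    simpa [norm_exp] using hsphere ζ hζ
  simpa [norm_exp] using hexp

theorem closedBall_norm_subset_unitDisk {c : ℂ} (hc : c ∈ unitDisk) :
    closedBall 0 ‖c‖ ⊆ unitDisk :=
  closedBall_subset_ball (mem_ball_zero_iff.mp hc)

def OneVariableStarlikeCondition (f : ℂ → ℂ) : Prop :=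
  ∀ z ∈ unitDisk, z ≠ 0 → ∀ x : ℂ, ‖x‖ = 1 → x ≠ 1 →
    0 ≤ ((f z - f (x * z)) / ((1 - x) * z * deriv f z)).re

/-- The quotient `(z - ζ) f'(z) / (f z - f ζ)` of `IsUST`, written with `dslope` so that it is
holomorphic across the diagonal, where it takes the value `1` (or `0` if `f'(z) = 0`). -/
def starlikeQuot (f : ℂ → ℂ) (z ζ : ℂ) : ℂ := deriv f z / dslope f ζ z

namespace starlikeQuot

variable {f : ℂ → ℂ} {z ζ : ℂ}

theorem eq_of_ne (h : z ≠ ζ) : starlikeQuot f z ζ = (z - ζ) * deriv f z / (f z - f ζ) := by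
  rw [starlikeQuot, dslope_of_ne f h, slope_def_field, div_div_eq_mul_div, mul_comm]

theorem eq_div_dslope : starlikeQuot f z ζ = deriv f z / dslope f z ζ := by
  rw [starlikeQuot, dslope_comm]

theorem re_self_nonneg : 0 ≤ (starlikeQuot f z z).re := by
  rw [starlikeQuot, dslope_same]
  rcases eq_or_ne (deriv f z) 0 with h | h
  · simp [h]
  · simp [div_self h]

theorem eq_zero_of_deriv_eq_zero (h : deriv f z = 0) : starlikeQuot f z ζ = 0 := by
  rw [starlikeQuot, h, zero_div]

theorem differentiableOn_left {U : Set ℂ} (hU : IsOpen U) (hd : DifferentiableOn ℂ f U)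
    (hinj : InjOn f U) (hζ : ζ ∈ U) (hfζ : deriv f ζ ≠ 0) :
    DifferentiableOn ℂ (fun w => starlikeQuot f w ζ) U :=
  (hd.deriv hU).div ((differentiableOn_dslope (hU.mem_nhds hζ)).mpr hd)
    fun _ hw => dslope_ne_zero_of_injOn hinj hζ hw hfζ

theorem differentiableOn_right {U : Set ℂ} (hU : IsOpen U) (hd : DifferentiableOn ℂ f U)
    (hinj : InjOn f U) (hz : z ∈ U) (hfz : deriv f z ≠ 0) :
    DifferentiableOn ℂ (starlikeQuot f z) U := by
  rw [show starlikeQuot f z = fun w => deriv f z / dslope f z w from funext fun _ => eq_div_dslope]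
  exact (differentiableOn_const _).div ((differentiableOn_dslope (hU.mem_nhds hz)).mpr hd)
    fun _ hw => dslope_ne_zero_of_injOn hinj hz hw hfz

theorem continuousAt_right {U : Set ℂ} (hU : IsOpen U) (hd : DifferentiableOn ℂ f U)
    (hinj : InjOn f U) (hz : z ∈ U) (hζ : ζ ∈ U) : ContinuousAt (starlikeQuot f z) ζ := by
  rcases eq_or_ne (deriv f z) 0 with h | h
  · rw [show starlikeQuot f z = fun _ => 0 from funext fun _ => eq_zero_of_deriv_eq_zero h]
    exact continuousAt_const
  · exact ((differentiableOn_right hU hd hinj hz h).differentiableAt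
      (hU.mem_nhds hζ)).continuousAt

end starlikeQuot

section

variable {f : ℂ → ℂ} {z ζ : ℂ}

theorem re_starlikeQuot_nonneg_of_norm_eq (hcond : OneVariableStarlikeCondition f)
    (hz : z ∈ unitDisk) (hzζ : ‖z‖ = ‖ζ‖) : 0 ≤ (starlikeQuot f z ζ).re := by
  rcases eq_or_ne z ζ with rfl | hne
  · exact starlikeQuot.re_self_nonneg
  have hz0 : z ≠ 0 := by
    rintro rfl
    exact hne (norm_eq_zero.mp (by rw [← hzζ, norm_zero])).symm
  set x := ζ / z
  have hx : ‖x‖ = 1 := by rw [norm_div, hzζ, div_self (hzζ ▸ norm_ne_zero_iff.mpr hz0)]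
  have hx1 : x ≠ 1 := fun h => hne ((div_eq_one_iff_eq hz0).mp h).symm
  have hxz : x * z = ζ := div_mul_cancel₀ ζ hz0
  have h := hcond z hz hz0 x hx hx1
  rw [sub_mul, one_mul, hxz, re_div_nonneg_comm] at h
  rwa [starlikeQuot.eq_of_ne hne]

theorem re_starlikeQuot_nonneg_of_norm_le_left (hd : DifferentiableOn ℂ f unitDisk)
    (hinj : InjOn f unitDisk) (hcond : OneVariableStarlikeCondition f) (hζ : ζ ∈ unitDisk)
    (hfζ : deriv f ζ ≠ 0) (hzζ : ‖z‖ ≤ ‖ζ‖) : 0 ≤ (starlikeQuot f z ζ).re :=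
  re_nonneg_of_forall_mem_sphere
    ((starlikeQuot.differentiableOn_left isOpen_ball hd hinj hζ hfζ).mono
      (closedBall_norm_subset_unitDisk hζ))
    (fun _ hw => re_starlikeQuot_nonneg_of_norm_eq hcond
      (closedBall_norm_subset_unitDisk hζ (sphere_subset_closedBall hw))
      (mem_sphere_zero_iff_norm.mp hw))
    (mem_closedBall_zero_iff.mpr hzζ)

theorem re_starlikeQuot_nonneg_of_norm_le_right (hd : DifferentiableOn ℂ f unitDisk)
    (hinj : InjOn f unitDisk) (hcond : OneVariableStarlikeCondition f) (hz : z ∈ unitDisk)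
    (hfz : deriv f z ≠ 0) (hζz : ‖ζ‖ ≤ ‖z‖) : 0 ≤ (starlikeQuot f z ζ).re :=
  re_nonneg_of_forall_mem_sphere
    ((starlikeQuot.differentiableOn_right isOpen_ball hd hinj hz hfz).mono
      (closedBall_norm_subset_unitDisk hz))
    (fun _ hw => re_starlikeQuot_nonneg_of_norm_eq hcond hz (mem_sphere_zero_iff_norm.mp hw).symm)
    (mem_closedBall_zero_iff.mpr hζz)

theorem re_starlikeQuot_nonneg (hf : IsNormalized f) (hinj : InjOn f unitDisk)
    (hcond : OneVariableStarlikeCondition f) (hz : z ∈ unitDisk) (hζ : ζ ∈ unitDisk) :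
    0 ≤ (starlikeQuot f z ζ).re := by
  rcases le_or_gt ‖ζ‖ ‖z‖ with hle | hlt
  · rcases eq_or_ne (deriv f z) 0 with h | h
    · simp [starlikeQuot.eq_zero_of_deriv_eq_zero h]
    · exact re_starlikeQuot_nonneg_of_norm_le_right hf.1 hinj hcond hz h hle
  -- `f'` may vanish at `ζ`: approach `ζ` through points where it does not.
  have hderiv : ∀ᶠ w in 𝓝[≠] ζ, deriv f w ≠ 0 :=
    (hf.1.analyticOnNhd isOpen_ball).deriv.eventually_ne_zero_of_preconnected
      (convex_ball 0 1).isPreconnected (mem_ball_self one_pos) (by simp [hf.2.2]) hζ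
  have hdisk : ∀ᶠ w in 𝓝 ζ, w ∈ unitDisk := isOpen_ball.mem_nhds hζ
  have hnear : ∀ᶠ w in 𝓝[≠] ζ, w ∈ unitDisk ∧ ‖z‖ < ‖w‖ := nhdsWithin_le_nhds <|
    hdisk.and ((isOpen_lt continuous_const continuous_norm).mem_nhds hlt)
  exact ge_of_tendsto
    (continuous_re.continuousAt.comp
      (starlikeQuot.continuousAt_right isOpen_ball hf.1 hinj hz hζ)).continuousWithinAt
    ((hderiv.and hnear).mono fun w ⟨hfw, hw, hzw⟩ =>
      re_starlikeQuot_nonneg_of_norm_le_left hf.1 hinj hcond hw hfw hzw.le)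

end

/-- Rønning's one-variable characterization of uniformly starlike functions. -/
theorem ust_one_variable_characterization (f : ℂ → ℂ) (hf : IsNormalized f)
    (hinj : Set.InjOn f unitDisk) :
    IsUST f ↔
      ∀ z ∈ unitDisk, z ≠ 0 → ∀ x : ℂ, ‖x‖ = 1 → x ≠ 1 →
        0 ≤ ((f z - f (x * z)) / ((1 - x) * z * deriv f z)).re := by
  constructor
  · rintro ⟨-, -, hust⟩ z hz hz0 x hx hx1
    have hxz : x * z ∈ unitDisk := by
      rwa [unitDisk, mem_ball_zero_iff, norm_mul, hx, one_mul, ← mem_ball_zero_iff]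
    have hne : z ≠ x * z := fun h => hx1 (mul_right_cancel₀ hz0 (by rw [one_mul, ← h]))
    rw [sub_mul, one_mul, re_div_nonneg_comm]
    exact hust z hz (x * z) hxz hne
  · intro hcond
    refine ⟨hf, hinj, fun z hz ζ hζ hne => ?_⟩
    rw [← starlikeQuot.eq_of_ne hne]
    exact re_starlikeQuot_nonneg hf hinj hcond hz hζ
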